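/- Suppose that φ(q_i) < M_i − 1 for all sufficiently large i. Then for all sufficiently large i, the point 1/q_i belongs to E. In particular, E contains the sequence a_i = 1/q_i, which tends to 0 and satisfies a_{i+1}/a_i = q_i^(1 − M_i) → 0 as i → ∞. -/

import Mathlib

open Filter Set Metric

/-!
Since `q i ∣ q j` for `i ≤ j`, the point `1 / q i` lies on every grid `G j` with `j ≥ i`. For
`j < i` its distance to `G j` is at most `1 / q i ≤ 1 / q (j + 1) = q j ^ (-M j)`, which is at most
`r j = q j ^ (-φ (q j))` as soon as `φ (q j) < M j`. So the hypothesis handles every `j` beyond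
some `N`, and the finitely many `j < N` are handled by taking `i` large, as `1 / q i → 0`.
-/

theorem Filter.eventually_forall_of_forall_ge {α : Type*} {l : Filter α} {P : α → ℕ → Prop}
    (N : ℕ) (hlt : ∀ j < N, ∀ᶠ a in l, P a j) (hge : ∀ j ≥ N, ∀ a, P a j) :
    ∀ᶠ a in l, ∀ j, P a j := by
  filter_upwards [(eventually_all_finite (finite_Iio N)).2 hlt] with a ha j
  rcases lt_or_ge j N with hj | hj
  · exact ha j hj
  · exact hge j hj a

theorem one_div_pow_div_one_div {x : ℝ} (hx : 0 < x) (m : ℕ) :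
    (1 / x ^ m) / (1 / x) = x ^ ((1 : ℝ) - m) := by
  rw [Real.rpow_sub hx, Real.rpow_one, Real.rpow_natCast]
  field_simp

theorem tendsto_rpow_one_sub_of_tendsto_atTop {ι : Type*} {l : Filter ι} {x m : ι → ℝ} {b : ℝ}
    (hb : 1 < b) (hx : ∀ i, b ≤ x i) (hm : Tendsto m l atTop) :
    Tendsto (fun i => x i ^ (1 - m i)) l (nhds 0) := by
  have hbm : Tendsto (fun i => b ^ (1 - m i)) l (nhds 0) :=
    (tendsto_rpow_atBot_of_base_gt_one b hb).comp
      (tendsto_atBot_add_const_left l 1 (tendsto_neg_atTop_atBot.comp hm))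
  refine tendsto_of_tendsto_of_tendsto_of_le_of_le' tendsto_const_nhds hbm
    (Eventually.of_forall fun i => Real.rpow_nonneg (by linarith [hx i]) _) ?_
  filter_upwards [hm.eventually_ge_atTop 1] with i hi
  exact Real.rpow_le_rpow_of_nonpos (by linarith) (hx i) (by linarith)

def grid (n : ℕ) : Set ℝ := {x | ∃ k : ℤ, 0 ≤ k ∧ k ≤ (n : ℤ) ∧ x = (k : ℝ) / (n : ℝ)}

theorem zero_mem_grid (n : ℕ) : (0 : ℝ) ∈ grid n :=
  ⟨0, le_rfl, Int.natCast_nonneg n, by simp⟩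

theorem one_div_mem_grid {m n : ℕ} (hn : n ≠ 0) (hmn : m ∣ n) : (1 : ℝ) / m ∈ grid n := by
  obtain ⟨c, rfl⟩ := hmn
  refine ⟨c, Int.natCast_nonneg c, ?_, ?_⟩
  · exact_mod_cast Nat.le_mul_of_pos_left c (Nat.pos_of_ne_zero (left_ne_zero_of_mul hn))
  · have hc : (c : ℝ) ≠ 0 := by exact_mod_cast right_ne_zero_of_mul hn
    push_cast
    rw [div_mul_cancel_right₀ hc, one_div]

theorem infDist_grid_le {x : ℝ} (hx : 0 ≤ x) (n : ℕ) : infDist x (grid n) ≤ x := by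
  simpa [abs_of_nonneg hx] using infDist_le_dist_of_mem (x := x) (zero_mem_grid n)

section PowerTower

variable {M q : ℕ → ℕ}

theorem monotone_of_pow_succ (hM : ∀ i, 0 < M i) (hq : ∀ i, q (i + 1) = q i ^ M i) :
    Monotone q :=
  monotone_nat_of_le_succ fun i => hq i ▸ Nat.le_self_pow (hM i).ne' _

theorem dvd_of_pow_succ (hM : ∀ i, 0 < M i) (hq : ∀ i, q (i + 1) = q i ^ M i) {i j : ℕ}
    (hij : i ≤ j) : q i ∣ q j := by
  induction j, hij using Nat.le_induction with
  | base => exact dvd_rfl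
  | succ j _ ih => exact hq j ▸ ih.trans (dvd_pow_self (q j) (hM j).ne')

theorem tendsto_atTop_of_pow_succ (hq : ∀ i, q (i + 1) = q i ^ M i) (h2 : ∀ i, 2 ≤ q i)
    (hM : Tendsto M atTop atTop) : Tendsto q atTop atTop := by
  refine (tendsto_add_atTop_iff_nat 1).1 (tendsto_atTop_mono (fun i => ?_) hM)
  calc M i ≤ 2 ^ M i := (Nat.lt_two_pow_self).le
    _ ≤ q (i + 1) := hq i ▸ Nat.pow_le_pow_left (h2 i) _

theorem infDist_one_div_grid_le (hM : ∀ i, 0 < M i) (hq : ∀ i, q (i + 1) = q i ^ M i)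
    (hpos : ∀ i, 0 < q i) (i j : ℕ) :
    infDist (1 / (q i : ℝ)) (grid (q j)) ≤ (q j : ℝ) ^ (-(M j : ℝ)) := by
  have hqj : (0 : ℝ) < q j := by exact_mod_cast hpos j
  rcases le_or_gt i j with hij | hji
  · rw [infDist_zero_of_mem (one_div_mem_grid (hpos j).ne' (dvd_of_pow_succ hM hq hij))]
    positivity
  · calc infDist (1 / (q i : ℝ)) (grid (q j)) ≤ 1 / (q i : ℝ) := infDist_grid_le (by positivity) _
      _ ≤ 1 / (q (j + 1) : ℝ) := one_div_le_one_div_of_le (by exact_mod_cast hpos (j + 1))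
          (by exact_mod_cast monotone_of_pow_succ hM hq hji)
      _ = (q j : ℝ) ^ (-(M j : ℝ)) := by
          rw [Real.rpow_neg hqj.le, Real.rpow_natCast, hq, Nat.cast_pow, one_div]

end PowerTower

theorem falconer_rapid_sequence_general
    (M : ℕ → ℕ) (hMpos : ∀ i, 0 < M i)
    (hMtop : Tendsto M atTop atTop)
    (q : ℕ → ℕ) (hq0 : q 0 = 2) (hqrec : ∀ i, q (i + 1) = q i ^ M i)
    (φ : ℝ → ℝ)
    (G : ℕ → Set ℝ)
    (hG : ∀ i, G i = {x : ℝ | ∃ k : ℤ, 0 ≤ k ∧ k ≤ (q i : ℤ) ∧ x = (k : ℝ) / (q i : ℝ)})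
    (r : ℕ → ℝ) (hr : ∀ i, r i = (q i : ℝ) ^ (-φ ((q i : ℕ) : ℝ)))
    (Ei : ℕ → Set ℝ)
    (hEi : ∀ i, Ei i = {x ∈ Set.Icc (0 : ℝ) 1 | Metric.infDist x (G i) ≤ r i})
    (E : Set ℝ) (hE : E = ⋂ i, Ei i)
    (hyp : ∀ᶠ i in atTop, φ ((q i : ℕ) : ℝ) < (M i : ℝ) - 1) :
    (∀ᶠ i in atTop, (1 : ℝ) / (q i : ℝ) ∈ E) ∧
      Tendsto (fun i => (1 : ℝ) / (q i : ℝ)) atTop (nhds 0) ∧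
      (∀ i, ((1 : ℝ) / (q (i + 1) : ℝ)) / ((1 : ℝ) / (q i : ℝ)) =
        (q i : ℝ) ^ ((1 : ℝ) - (M i : ℝ))) ∧
      Tendsto (fun i => ((1 : ℝ) / (q (i + 1) : ℝ)) / ((1 : ℝ) / (q i : ℝ)))
        atTop (nhds 0) := by
  have h2 : ∀ i, 2 ≤ q i := fun i => hq0 ▸ monotone_of_pow_succ hMpos hqrec (Nat.zero_le i)
  have hpos : ∀ i, 0 < q i := fun i => two_pos.trans_le (h2 i)
  have hlim : Tendsto (fun i => (1 : ℝ) / (q i : ℝ)) atTop (nhds 0) := by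
    simpa only [one_div, Pi.inv_def, Function.comp_def] using (tendsto_natCast_atTop_atTop.comp
      (tendsto_atTop_of_pow_succ hqrec h2 hMtop)).inv_tendsto_atTop
  have hratio : ∀ i, ((1 : ℝ) / (q (i + 1) : ℝ)) / ((1 : ℝ) / (q i : ℝ)) =
      (q i : ℝ) ^ ((1 : ℝ) - (M i : ℝ)) := fun i => by
    rw [hqrec, Nat.cast_pow]
    exact one_div_pow_div_one_div (by exact_mod_cast hpos i) _
  have hdist : ∀ᶠ i in atTop, ∀ j, infDist (1 / (q i : ℝ)) (grid (q j)) ≤ r j := by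
    obtain ⟨N, hN⟩ := eventually_atTop.1 hyp
    refine eventually_forall_of_forall_ge N (fun j _ => ?_) (fun j hj i => ?_)
    · have hrj : 0 < r j := hr j ▸ Real.rpow_pos_of_pos (by exact_mod_cast hpos j) _
      filter_upwards [hlim.eventually (ge_mem_nhds hrj)] with i hi
      exact (infDist_grid_le (by positivity) _).trans hi
    · refine (infDist_one_div_grid_le hMpos hqrec hpos i j).trans (hr j ▸ ?_)
      exact Real.rpow_le_rpow_of_exponent_le (by exact_mod_cast (h2 j).trans' one_le_two)
        (by linarith [hN j hj])
  refine ⟨?_, hlim, hratio, ?_⟩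
  · filter_upwards [hdist] with i hi
    rw [hE, mem_iInter]
    intro j
    rw [hEi, hG]
    exact ⟨⟨by positivity, div_le_one_of_le₀ (by exact_mod_cast (h2 i).trans' one_le_two)
      (by positivity)⟩, hi j⟩
  · simp_rw [hratio]
    exact tendsto_rpow_one_sub_of_tendsto_atTop one_lt_two (fun i => by exact_mod_cast h2 i)
      (tendsto_natCast_atTop_atTop.comp hMtop)

/-- If `φ(q i) < M i - 1` eventually, then `1 / q i ∈ E` for all
sufficiently large `i`; the sequence `1 / q i` tends to `0` and the ratios
`(1/q (i+1)) / (1/q i) = q i ^ (1 - M i)` tend to `0`. -/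
theorem falconer_rapid_sequence
    (M : ℕ → ℕ) (hMpos : ∀ i, 0 < M i) (hMmono : Monotone M)
    (hMtop : Tendsto M atTop atTop)
    (q : ℕ → ℕ) (hq0 : q 0 = 2) (hqrec : ∀ i, q (i + 1) = q i ^ M i)
    (φ : ℝ → ℝ) (hφpos : ∀ t : ℝ, 2 ≤ t → 0 < φ t)
    (hφmono : MonotoneOn φ (Set.Ici (2 : ℝ)))
    (hφtop : Tendsto φ atTop atTop)
    (G : ℕ → Set ℝ)
    (hG : ∀ i, G i = {x : ℝ | ∃ k : ℤ, 0 ≤ k ∧ k ≤ (q i : ℤ) ∧ x = (k : ℝ) / (q i : ℝ)})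
    (r : ℕ → ℝ) (hr : ∀ i, r i = (q i : ℝ) ^ (-φ ((q i : ℕ) : ℝ)))
    (Ei : ℕ → Set ℝ)
    (hEi : ∀ i, Ei i = {x ∈ Set.Icc (0 : ℝ) 1 | Metric.infDist x (G i) ≤ r i})
    (E : Set ℝ) (hE : E = ⋂ i, Ei i)
    (hyp : ∀ᶠ i in atTop, φ ((q i : ℕ) : ℝ) < (M i : ℝ) - 1) :
    (∀ᶠ i in atTop, (1 : ℝ) / (q i : ℝ) ∈ E) ∧
      Tendsto (fun i => (1 : ℝ) / (q i : ℝ)) atTop (nhds 0) ∧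
      (∀ i, ((1 : ℝ) / (q (i + 1) : ℝ)) / ((1 : ℝ) / (q i : ℝ)) =
        (q i : ℝ) ^ ((1 : ℝ) - (M i : ℝ))) ∧
      Tendsto (fun i => ((1 : ℝ) / (q (i + 1) : ℝ)) / ((1 : ℝ) / (q i : ℝ)))
        atTop (nhds 0) :=
  falconer_rapid_sequence_general M hMpos hMtop q hq0 hqrec φ G hG r hr Ei hEi E hE hyp
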